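/- A 2D fourth-order harmonic tensor H ∈ H⁴(ℝ²) is always a perfect harmonic square: there exists a second-order symmetric traceless tensor h on ℝ² with H = h ∗ h, where h ∗ h = h ⊙ h − ¼ tr(h²)·Id ⊙ Id; explicitly H = h⊗h − ½‖h‖²·J with J = I − ½ Id⊗Id. -/
import Mathlib


open Matrix

/-- Fourth order tensors on `ℝ²` (by components). -/
abbrev Tens4₂ := Fin 2 → Fin 2 → Fin 2 → Fin 2 → ℝ

/-- The totally symmetric tensor product `a ⊙ b` of two symmetric second order tensors
on `ℝ²`. -/
noncomputable def sym4₂ (a b : Matrix (Fin 2) (Fin 2) ℝ) : Tens4₂ :=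
  fun i j k l => (1 / 6) * (a i j * b k l + b i j * a k l + a i k * b j l +
    b i k * a j l + a i l * b j k + b i l * a j k)

/-- The 2D harmonic product of two second order symmetric deviatoric tensors:
`h₁ ∗ h₂ = h₁ ⊙ h₂ − ¼ tr(h₁h₂) Id ⊙ Id`. -/
noncomputable def hprod2D (h₁ h₂ : Matrix (Fin 2) (Fin 2) ℝ) : Tens4₂ :=
  fun i j k l => sym4₂ h₁ h₂ i j k l - (1 / 4) * (h₁ * h₂).trace * sym4₂ 1 1 i j k l

/-- The fourth order identity on symmetric second order tensors,
`I_{ijkl} = ½(δ_{ik}δ_{jl} + δ_{il}δ_{jk})`. -/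
noncomputable def Iten2D : Tens4₂ := fun i j k l =>
  (1 / 2) * ((1 : Matrix (Fin 2) (Fin 2) ℝ) i k * (1 : Matrix (Fin 2) (Fin 2) ℝ) j l +
    (1 : Matrix (Fin 2) (Fin 2) ℝ) i l * (1 : Matrix (Fin 2) (Fin 2) ℝ) j k)

/-- `J = I − ½ Id ⊗ Id`, the projector onto 2D deviators. -/
noncomputable def Jten2D : Tens4₂ := fun i j k l =>
  Iten2D i j k l -
    (1 / 2) * ((1 : Matrix (Fin 2) (Fin 2) ℝ) i j * (1 : Matrix (Fin 2) (Fin 2) ℝ) k l)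

set_option maxHeartbeats 1600000 in
/-- **Every 2D fourth order harmonic tensor is a perfect harmonic square**: if `H` is a
totally symmetric traceless fourth order tensor on `ℝ²`, then there is a symmetric
traceless second order tensor `h` with `H = h ∗ h`, and explicitly
`H = h ⊗ h − ½‖h‖² J`. -/
theorem harmonic_square_2D (H : Tens4₂)
    (hsym₁ : ∀ i j k l, H i j k l = H j i k l)
    (hsym₂ : ∀ i j k l, H i j k l = H i k j l)
    (hsym₃ : ∀ i j k l, H i j k l = H i j l k)
    (htr : ∀ k l, ∑ i : Fin 2, H i i k l = 0) :
    ∃ h : Matrix (Fin 2) (Fin 2) ℝ, h.IsSymm ∧ h.trace = 0 ∧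
      H = hprod2D h h ∧
      H = fun i j k l =>
        h i j * h k l - (1 / 2) * (∑ p : Fin 2, ∑ q : Fin 2, h p q ^ 2) * Jten2D i j k l := by
  -- abbreviations for the two independent components
  set a := H 0 0 0 0 with ha
  set b := H 0 0 0 1 with hb
  -- trace relations in expanded form
  have t00 := htr 0 0
  have t01 := htr 0 1
  have t10 := htr 1 0
  have t11 := htr 1 1
  simp only [Fin.sum_univ_two] at t00 t01 t10 t11
  -- all 16 components of H
  have v0010 : H 0 0 1 0 = b := by rw [hsym₃]
  have v0100 : H 0 1 0 0 = b := by rw [hsym₂ 0 1 0 0]; exact v0010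
  have v1000 : H 1 0 0 0 = b := by rw [← v0100, hsym₁]
  have v1100 : H 1 1 0 0 = -a := by linarith
  have v1010 : H 1 0 1 0 = -a := by rw [← v1100, hsym₂]
  have v0110 : H 0 1 1 0 = -a := by rw [← v1010, hsym₁]
  have v0101 : H 0 1 0 1 = -a := by rw [← v0110, hsym₃]
  have v1001 : H 1 0 0 1 = -a := by rw [← v0101, hsym₁]
  have v0011 : H 0 0 1 1 = -a := by rw [← v0101, hsym₂]
  have v1111 : H 1 1 1 1 = a := by rw [v0011] at t11; linarith
  have v1101 : H 1 1 0 1 = -b := by linarith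
  have v1110 : H 1 1 1 0 = -b := by rw [← v1101, hsym₃]
  have v1011 : H 1 0 1 1 = -b := by rw [← v1101, hsym₂]
  have v0111 : H 0 1 1 1 = -b := by rw [← v1011, hsym₁]
  -- construct h
  set r := Real.sqrt (a ^ 2 + b ^ 2) with hrdef
  have hr0 : 0 ≤ r := Real.sqrt_nonneg _
  have hr2 : r ^ 2 = a ^ 2 + b ^ 2 := Real.sq_sqrt (by positivity)
  have habs : |a| ≤ r := by
    rw [hrdef, ← Real.sqrt_sq_eq_abs]
    exact Real.sqrt_le_sqrt (by nlinarith [sq_nonneg b])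
  have hrpa : 0 ≤ r + a := by cases abs_le.mp habs with | intro h1 h2 => linarith
  have hrma : 0 ≤ r - a := by cases abs_le.mp habs with | intro h1 h2 => linarith
  set x := Real.sqrt (r + a) with hxdef
  set y := if 0 ≤ b then Real.sqrt (r - a) else -Real.sqrt (r - a) with hydef
  have hx2 : x ^ 2 = r + a := Real.sq_sqrt hrpa
  have hy2 : y ^ 2 = r - a := by
    rw [hydef]; split <;> simp [Real.sq_sqrt hrma, neg_pow]
  have hxy : x * y = b := by
    have hbase : Real.sqrt (r + a) * Real.sqrt (r - a) = |b| := by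
      rw [← Real.sqrt_mul hrpa, ← Real.sqrt_sq_eq_abs]
      congr 1
      nlinarith [hr2]
    by_cases hsgn : 0 ≤ b
    · rw [hxdef, hydef, if_pos hsgn, hbase, abs_of_nonneg hsgn]
    · rw [hxdef, hydef, if_neg hsgn, mul_neg, hbase, abs_of_neg (lt_of_not_ge hsgn)]
      ring
  have htr2 : ((!![x, y; y, -x] : Matrix (Fin 2) (Fin 2) ℝ) * !![x, y; y, -x]).trace
      = 2 * x ^ 2 + 2 * y ^ 2 := by
    simp [Matrix.trace, Matrix.mul_apply, Fin.sum_univ_two]; ring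
  refine ⟨!![x, y; y, -x], ?_, ?_, ?_, ?_⟩
  · rw [Matrix.IsSymm]; ext i j; fin_cases i <;> fin_cases j <;> simp
  · simp [Matrix.trace, Fin.sum_univ_two]
  · funext i j k l
    fin_cases i <;> fin_cases j <;> fin_cases k <;> fin_cases l <;>
      simp only [Fin.zero_eta, Fin.mk_one, ha, hb, v0010, v0100, v1000, v1100, v1010,
        v0110, v0101, v1001, v0011, v1111, v1101, v1110, v1011, v0111] <;>
      simp [hprod2D, sym4₂, htr2, Matrix.one_apply, Fin.mk_zero, Fin.mk_one] <;>
      linarith [hx2, hy2, hxy, sq_nonneg x, sq_nonneg y]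
  · funext i j k l
    fin_cases i <;> fin_cases j <;> fin_cases k <;> fin_cases l <;>
      simp only [Fin.zero_eta, Fin.mk_one, ha, hb, v0010, v0100, v1000, v1100, v1010,
        v0110, v0101, v1001, v0011, v1111, v1101, v1110, v1011, v0111] <;>
      simp [Jten2D, Iten2D, Fin.sum_univ_two, Matrix.one_apply, Fin.mk_zero, Fin.mk_one] <;>
      linarith [hx2, hy2, hxy]
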